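/- (Chevalley estimate.) Let A₁,…,A_q ∈ ℝ⟦x₁,…,xₙ⟧ᵖ, let A : ℝ⟦x⟧^q → ℝ⟦x⟧ᵖ be the module homomorphism given by multiplication by the matrix with columns A₁,…,A_q, let M = Im A, and let R = Ker A (the submodule of relations among the columns of A). Let (α_i,j_i), i = 1,…,t, denote the vertices of the diagram of initial exponents 𝒩(M), and set λ := max_i |α_i|. Then for all l ∈ ℕ: A⁻¹(𝔪^{l+λ}·ℝ⟦x⟧ᵖ) ⊆ R + 𝔪^l·ℝ⟦x⟧^q, where 𝔪 = (x₁,…,xₙ) is the maximal ideal of ℝ⟦x⟧. -/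

import Mathlib

open Classical

/-- Index set `ℕⁿ × {1,…,p}` for coefficients of elements of `A⟦x₁,…,xₙ⟧ᵖ`. -/
abbrev Idx (n p : ℕ) := (Fin n →₀ ℕ) × Fin p

/-- Total degree `|α|` of a multiindex. -/
def degF {n : ℕ} (α : Fin n →₀ ℕ) : ℕ := ∑ i, α i

/-- Lexicographic order on multiindices. -/
def lexLT {n : ℕ} (α β : Fin n →₀ ℕ) : Prop :=
  ∃ i : Fin n, (∀ j, j < i → α j = β j) ∧ α i < β i

/-- The total order on `ℕⁿ × {1,…,p}` comparing `(|α|, j, α)` lexicographically. -/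
def idxLT {n p : ℕ} (a b : Idx n p) : Prop :=
  degF a.1 < degF b.1 ∨
    (degF a.1 = degF b.1 ∧ ((a.2 : ℕ) < (b.2 : ℕ) ∨ (a.2 = b.2 ∧ lexLT a.1 b.1)))

def idxLE {n p : ℕ} (a b : Idx n p) : Prop := idxLT a b ∨ a = b

/-- Support of `F ∈ A⟦x⟧ᵖ`. -/
def suppV {n p : ℕ} {A : Type} [Semiring A] (F : Fin p → MvPowerSeries (Fin n) A) :
    Set (Idx n p) :=
  {d | MvPowerSeries.coeff d.1 (F d.2) ≠ 0}

/-- `d` is the initial exponent `exp F` of `F`. -/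
def IsExpOf {n p : ℕ} {A : Type} [Semiring A] (F : Fin p → MvPowerSeries (Fin n) A)
    (d : Idx n p) : Prop :=
  d ∈ suppV F ∧ ∀ d' ∈ suppV F, idxLE d d'

/-- `S + ℕⁿ`, for `S ⊆ ℕⁿ × {1,…,p}`. -/
def setShift {n p : ℕ} (S : Set (Idx n p)) : Set (Idx n p) :=
  {d | ∃ s ∈ S, ∃ β : Fin n →₀ ℕ, d = (s.1 + β, s.2)}

/-- The diagram of initial exponents `𝒩(M) = {exp F : F ∈ M ∖ {0}}` of a submodule `M`
of `A⟦x⟧ᵖ`. -/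
def diagramOf {n p : ℕ} {A : Type} [CommRing A]
    (M : Submodule (MvPowerSeries (Fin n) A) (Fin p → MvPowerSeries (Fin n) A)) :
    Set (Idx n p) :=
  {d | ∃ F ∈ M, F ≠ 0 ∧ IsExpOf F d}

/-- `d` is a vertex of the diagram `𝒩`: `(𝒩 ∖ {d}) + ℕⁿ ≠ 𝒩`. -/
def IsVertex {n p : ℕ} (𝒩 : Set (Idx n p)) (d : Idx n p) : Prop :=
  setShift (𝒩 \ {d}) ≠ 𝒩

/-- `(α_i, j_i) + ℕⁿ`. -/
def DeltaFull {n p q : ℕ} (e : Fin q → Idx n p) (i : Fin q) : Set (Idx n p) :=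
  {d | d.2 = (e i).2 ∧ ∃ β : Fin n →₀ ℕ, d.1 = (e i).1 + β}

/-- The sets `Δ_i` of Hironaka's division: `Δ_i = ((α_i,j_i) + ℕⁿ) ∖ (Δ_1 ∪ ⋯ ∪ Δ_{i−1})`. -/
def Delta {n p q : ℕ} (e : Fin q → Idx n p) (i : Fin q) : Set (Idx n p) :=
  DeltaFull e i \ ⋃ (k : Fin q) (hk : k < i), Delta e k
termination_by i.val
decreasing_by exact hk

/-- The complementary region `Δ = ℕⁿ×{1,…,p} ∖ (Δ_1 ∪ ⋯ ∪ Δ_q)`. -/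
def DeltaC {n p q : ℕ} (e : Fin q → Idx n p) : Set (Idx n p) :=
  (⋃ i : Fin q, Delta e i)ᶜ

/-!
Every element of the diagram `𝒩(M)` lies above a vertex, of degree at most `λ`. So if `F ∈ M`
has order `D` and initial exponent `(v + β, j)` with `v` a vertex, subtracting `c x^β H`, where
`H ∈ M` has initial exponent `(v, j)`, removes the initial term at the cost of a multiplier in
`𝔪^(D-λ)`. Repeating this over the finitely many exponents of degree `D` raises the order of `F`
to `D + 1`; repeating over `D = l+λ, l+λ+1, …` produces multipliers whose partial sums converge
`𝔪`-adically to some `W ∈ 𝔪^l` with `A W = A G`, and then `G - W ∈ R`.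
-/

open MvPowerSeries Matrix

section MonomialOrder

variable {n p : ℕ}

lemma degF_eq_degree (α : Fin n →₀ ℕ) : degF α = α.degree :=
  (Finsupp.degree_eq_sum α).symm

/-- Realises `idxLT` as the order of a well-founded, linearly ordered, cancellative monoid. -/
def idxKey (a : Idx n p) : ℕ ×ₗ ℕ ×ₗ Lex (Fin n → ℕ) :=
  toLex (degF a.1, toLex ((a.2 : ℕ), toLex ⇑a.1))

lemma idxKey_injective : Function.Injective (idxKey : Idx n p → _) := by
  intro a b h
  simp only [idxKey, toLex_inj, Prod.mk.injEq, Fin.val_inj] at h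
  exact Prod.ext (DFunLike.coe_injective h.2.2) h.2.1

lemma idxLT_iff_idxKey_lt {a b : Idx n p} : idxLT a b ↔ idxKey a < idxKey b := by
  simp only [idxLT, idxKey, Prod.Lex.toLex_lt_toLex, Fin.val_inj]
  rfl

lemma idxLE_iff_idxKey_le {a b : Idx n p} : idxLE a b ↔ idxKey a ≤ idxKey b := by
  rw [idxLE, le_iff_lt_or_eq, idxLT_iff_idxKey_lt, idxKey_injective.eq_iff]

lemma idxKey_shift (a : Idx n p) (β : Fin n →₀ ℕ) :
    idxKey (a.1 + β, a.2) = idxKey a + toLex (degF β, toLex (0, toLex ⇑β)) := by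
  simp only [idxKey, degF_eq_degree, map_add]
  rfl

lemma idxLE.shift {a b : Idx n p} (h : idxLE a b) (β : Fin n →₀ ℕ) :
    idxLE (a.1 + β, a.2) (b.1 + β, b.2) := by
  rw [idxLE_iff_idxKey_le, idxKey_shift, idxKey_shift]
  exact add_le_add_left (idxLE_iff_idxKey_le.1 h) _

lemma idxLE.degF_le {a b : Idx n p} (h : idxLE a b) : degF a.1 ≤ degF b.1 := by
  rcases h with (h | ⟨h, -⟩) | rfl <;> omega

lemma idxLT.degF_le {a b : Idx n p} (h : idxLT a b) : degF a.1 ≤ degF b.1 :=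
  idxLE.degF_le (Or.inl h)

lemma finite_setOf_degF_eq (D : ℕ) : {a : Idx n p | degF a.1 = D}.Finite := by
  convert (Finsupp.finite_of_degree_eq (σ := Fin n) D).prod (Set.finite_univ (α := Fin p)) using 1
  ext a
  simp [degF_eq_degree]

end MonomialOrder

section InitialExponent

variable {n p : ℕ} {R : Type} [Semiring R]

lemma exists_isExpOf {F : Fin p → MvPowerSeries (Fin n) R} (hF : (suppV F).Nonempty) :
    ∃ d, IsExpOf F d := by
  obtain ⟨d, hd, hmin⟩ := (InvImage.wf idxKey wellFounded_lt).has_min _ hF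
  exact ⟨d, hd, fun x hx => idxLE_iff_idxKey_le.2 (not_lt.1 (hmin x hx))⟩

lemma ne_zero_of_mem_suppV {F : Fin p → MvPowerSeries (Fin n) R} {d : Idx n p}
    (hd : d ∈ suppV F) : F ≠ 0 := by
  rintro rfl
  exact hd (by simp)

lemma mem_suppV_or_of_mem_suppV_sub {R : Type} [Ring R] {F G : Fin p → MvPowerSeries (Fin n) R}
    {x : Idx n p} (hx : x ∈ suppV (F - G)) : x ∈ suppV F ∨ x ∈ suppV G := by
  by_contra! h
  apply hx
  simp [Pi.sub_apply, map_sub, not_not.1 h.1, not_not.1 h.2]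

lemma IsExpOf.idxLT_of_mem_suppV_sub {R : Type} [Ring R] {F G : Fin p → MvPowerSeries (Fin n) R}
    {d : Idx n p} (hF : IsExpOf F d) (hG : IsExpOf G d)
    (hFG : coeff d.1 (F d.2) = coeff d.1 (G d.2)) {x : Idx n p} (hx : x ∈ suppV (F - G)) :
    idxLT d x := by
  have hle : idxLE d x := (mem_suppV_or_of_mem_suppV_sub hx).elim (hF.2 x) (hG.2 x)
  refine hle.resolve_right ?_
  rintro rfl
  exact hx (by simp [Pi.sub_apply, map_sub, hFG])

lemma IsExpOf.monomial_smul [NoZeroDivisors R] {H : Fin p → MvPowerSeries (Fin n) R}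
    {v : Idx n p} (hH : IsExpOf H v) (β : Fin n →₀ ℕ) {c : R} (hc : c ≠ 0) :
    IsExpOf (monomial β c • H) (v.1 + β, v.2) := by
  refine ⟨?_, fun x hx => ?_⟩
  · simpa [suppV, coeff_monomial_mul] using mul_ne_zero hc hH.1
  · simp only [suppV, Set.mem_ofPred_eq, Pi.smul_apply, smul_eq_mul, coeff_monomial_mul] at hx
    split_ifs at hx with hβ
    · have := (hH.2 (x.1 - β, x.2) (right_ne_zero_of_mul hx)).shift β
      rwa [tsub_add_cancel_of_le hβ] at this
    · exact absurd rfl hx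

lemma exists_isExpOf_degF_eq {F : Fin p → MvPowerSeries (Fin n) R} {D : ℕ}
    (hD : ∀ x ∈ suppV F, D ≤ degF x.1) (h : ¬ ∀ x ∈ suppV F, D < degF x.1) :
    ∃ d, IsExpOf F d ∧ degF d.1 = D := by
  simp only [not_forall, not_lt] at h
  obtain ⟨x, hx, hxD⟩ := h
  obtain ⟨d, hd⟩ := exists_isExpOf ⟨x, hx⟩
  exact ⟨d, hd, le_antisymm ((hd.2 x hx).degF_le.trans hxD) (hD d hd.1)⟩

lemma eq_zero_of_forall_le_degF {F : Fin p → MvPowerSeries (Fin n) R}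
    (h : ∀ k, ∀ x ∈ suppV F, k ≤ degF x.1) : F = 0 := by
  funext j
  ext α
  by_contra hα
  exact (degF α).not_succ_le_self (h (degF α + 1) (α, j) hα)

end InitialExponent

/-- An element below `d` of least degree is a vertex. -/
lemma exists_isVertex_le {n p : ℕ} {𝒩 : Set (Idx n p)} {d : Idx n p} (hd : d ∈ 𝒩) :
    ∃ v ∈ 𝒩, IsVertex 𝒩 v ∧ v.2 = d.2 ∧ ∃ β, d.1 = v.1 + β := by
  set below := {v ∈ 𝒩 | v.2 = d.2 ∧ ∃ β, d.1 = v.1 + β}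
  obtain ⟨v, ⟨hv, hvj, β, hβ⟩, hmin⟩ := (InvImage.wf (fun v : Idx n p => degF v.1)
    wellFounded_lt).has_min below ⟨d, hd, rfl, 0, (add_zero _).symm⟩
  refine ⟨v, hv, fun hshift => ?_, hvj, β, hβ⟩
  obtain ⟨s, ⟨hs, hsv⟩, γ, rfl⟩ : v ∈ setShift (𝒩 \ {v}) := by rwa [hshift]
  have hγ : γ ≠ 0 := by
    rintro rfl
    exact hsv (by simp)
  refine hmin s ⟨hs, hvj, γ + β, by rw [hβ, add_assoc]⟩ ?_
  change degF s.1 < degF (s.1 + γ)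
  rw [degF_eq_degree, degF_eq_degree, map_add, lt_add_iff_pos_right, pos_iff_ne_zero,
    Ne, Finsupp.degree_eq_zero_iff]
  exact hγ

namespace MvPowerSeries

variable {σ R : Type*} [CommSemiring R]

lemma le_order_of_mem_pow {f : MvPowerSeries σ R} {k : ℕ}
    (hf : f ∈ Ideal.span (Set.range (X : σ → MvPowerSeries σ R)) ^ k) :
    (k : ℕ∞) ≤ f.order := by
  induction k generalizing f with
  | zero => simp
  | succ k ih =>
    rw [pow_succ] at hf
    refine Submodule.mul_induction_on hf (fun a ha b hb => ?_)
      (fun a b ha hb => (le_min ha hb).trans min_order_le_add)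
    have hb1 : 1 ≤ b.order := by
      rw [one_le_order_iff_constCoeff_eq_zero, ← RingHom.mem_ker]
      refine (Ideal.span_le.2 ?_) hb
      rintro - ⟨s, rfl⟩
      simp
    calc ((k + 1 : ℕ) : ℕ∞) = k + 1 := by push_cast; rfl
      _ ≤ a.order + b.order := add_le_add (ih ha) hb1
      _ ≤ (a * b).order := le_order_mul

lemma monomial_mem_pow (β : σ →₀ ℕ) (c : R) :
    monomial β c ∈ Ideal.span (Set.range (X : σ → MvPowerSeries σ R)) ^ β.degree := by
  have hβ : monomial β (1 : R) = β.prod fun s e => X s ^ e := by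
    simpa using monomial_eq (R := R) β (fun _ => 1)
  have hc : monomial β c = monomial 0 c * monomial β 1 := by
    rw [monomial_mul_monomial, zero_add, mul_one]
  rw [hc, hβ, Finsupp.degree_apply, ← Finset.prod_pow_eq_pow_sum]
  exact Ideal.mul_mem_left _ _
    (Ideal.prod_mem_prod fun s _ => Ideal.pow_mem_pow (Ideal.subset_span (Set.mem_range_self s)) _)

end MvPowerSeries

section AdicLimits

variable {R : Type*} [CommRing R] {I : Ideal R}

lemma mem_smul_top_pi_iff {ι : Type*} [Fintype ι] [DecidableEq ι] {F : ι → R} :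
    F ∈ I • (⊤ : Submodule R (ι → R)) ↔ ∀ j, F j ∈ I := by
  refine ⟨fun hF j => ?_, fun hF => ?_⟩
  · exact Submodule.smul_induction_on (p := fun G : ι → R => G j ∈ I) hF
      (fun r hr G _ => I.mul_mem_right (G j) hr) (fun G G' hG hG' => I.add_mem hG hG')
  · rw [pi_eq_sum_univ F]
    exact Submodule.sum_mem _ fun j _ => Submodule.smul_mem_smul (hF j) Submodule.mem_top

lemma vecMul_apply_mem {ι κ : Type*} [Fintype ι] {v : ι → R} (hv : ∀ i, v i ∈ I)
    (A : Matrix ι κ R) (j : κ) : (v ᵥ* A) j ∈ I :=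
  Submodule.sum_mem _ fun i _ => I.mul_mem_right _ (hv i)

lemma IsPrecomplete.exists_sub_mem_pow_of_sub_mem_pow [IsPrecomplete I R] {S : ℕ → R} {l : ℕ}
    (hS : ∀ k, S (k + 1) - S k ∈ I ^ (l + k)) : ∃ L, ∀ k, L - S k ∈ I ^ (l + k) := by
  have hcauchy : ∀ m n, m ≤ n → S n - S m ∈ I ^ (l + m) := by
    refine fun m => Nat.le_induction (by simp) fun n hmn ih => ?_
    rw [← sub_add_sub_cancel]
    exact add_mem (Ideal.pow_le_pow_right (by omega) (hS n)) ih
  obtain ⟨L, hL⟩ := IsPrecomplete.prec ‹_› (f := S) fun {m n} hmn => by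
    rw [SModEq.sub_mem, smul_eq_mul, Ideal.mul_top, ← neg_mem_iff, neg_sub]
    exact Ideal.pow_le_pow_right le_add_self (hcauchy m n hmn)
  refine ⟨L, fun k => ?_⟩
  have hLk : L - S (l + k) ∈ I ^ (l + k) := by
    have := SModEq.sub_mem.1 (hL (l + k))
    rw [smul_eq_mul, Ideal.mul_top] at this
    rw [← neg_sub]
    exact neg_mem this
  rw [← sub_add_sub_cancel]
  exact add_mem hLk (hcauchy k (l + k) le_add_self)

end AdicLimits

section Support

variable {n p : ℕ} {R : Type} [CommSemiring R]

lemma le_degF_of_mem_suppV_of_mem_pow {F : Fin p → MvPowerSeries (Fin n) R} {k : ℕ}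
    (hF : ∀ j, F j ∈ Ideal.span (Set.range (X : Fin n → MvPowerSeries (Fin n) R)) ^ k)
    {x : Idx n p} (hx : x ∈ suppV F) : k ≤ degF x.1 := by
  by_contra! hlt
  refine hx (coeff_of_lt_order (lt_of_lt_of_le ?_ (le_order_of_mem_pow (hF x.2))))
  rw [← degF_eq_degree]
  exact_mod_cast hlt

end Support

section Division

variable {n p q : ℕ} {K : Type} [Field K] (A : Matrix (Fin q) (Fin p) (MvPowerSeries (Fin n) K))

local notation "𝔪" => Ideal.span (Set.range (X : Fin n → MvPowerSeries (Fin n) K))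

lemma mem_span_range_iff_exists_vecMul {F : Fin p → MvPowerSeries (Fin n) K} :
    F ∈ Submodule.span (MvPowerSeries (Fin n) K) (Set.range A) ↔ ∃ C, C ᵥ* A = F :=
  (Submodule.mem_span_range_iff_exists_fun _).trans
    (exists_congr fun C => Eq.congr_left (vecMul_eq_sum C A).symm)

variable {A} {lam : ℕ}
  (hlam : ∀ v, IsVertex (diagramOf (Submodule.span (MvPowerSeries (Fin n) K) (Set.range A))) v →
    degF v.1 ≤ lam)
include hlam

lemma exists_idxLT_of_mem_suppV_sub_vecMul {F : Fin p → MvPowerSeries (Fin n) K}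
    (hF : F ∈ Submodule.span (MvPowerSeries (Fin n) K) (Set.range A)) {d : Idx n p}
    (hd : IsExpOf F d) :
    ∃ T : Fin q → MvPowerSeries (Fin n) K, (∀ i, T i ∈ 𝔪 ^ (degF d.1 - lam)) ∧
      ∀ x ∈ suppV (F - T ᵥ* A), idxLT d x := by
  obtain ⟨v, ⟨H, hH, -, hv⟩, hvert, hvj, β, hβ⟩ :=
    exists_isVertex_le (𝒩 := diagramOf _) ⟨F, hF, ne_zero_of_mem_suppV hd.1, hd⟩
  obtain ⟨C, rfl⟩ := (mem_span_range_iff_exists_vecMul A).1 hH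
  set c := coeff d.1 (F d.2) / coeff v.1 ((C ᵥ* A) v.2)
  have hvβ : (v.1 + β, v.2) = d := Prod.ext hβ.symm hvj
  refine ⟨monomial β c • C, fun i => ?_, fun x hx => ?_⟩
  · have hdeg : degF d.1 - lam ≤ β.degree := by
      have := hlam v hvert
      rw [hβ, degF_eq_degree, map_add]
      rw [degF_eq_degree] at this
      omega
    exact Ideal.pow_le_pow_right hdeg (Ideal.mul_mem_right _ _ (monomial_mem_pow β c))
  · have hdβ : d.1 - β = v.1 := by rw [hβ, add_tsub_cancel_right]
    have hcoeff : coeff d.1 ((monomial β c • C ᵥ* A) d.2) = coeff d.1 (F d.2) := by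
      rw [Pi.smul_apply, smul_eq_mul, coeff_monomial_mul, if_pos (hβ ▸ le_add_self), hdβ,
        ← hvj, div_mul_cancel₀ _ hv.1, hvj]
    rw [smul_vecMul] at hx
    exact hd.idxLT_of_mem_suppV_sub (hvβ ▸ hv.monomial_smul β (div_ne_zero hd.1 hv.1))
      hcoeff.symm hx

lemma exists_lt_degF_of_mem_suppV_sub_vecMul {D : ℕ} {F : Fin p → MvPowerSeries (Fin n) K}
    (hF : F ∈ Submodule.span (MvPowerSeries (Fin n) K) (Set.range A))
    (hD : ∀ x ∈ suppV F, D ≤ degF x.1) :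
    ∃ T : Fin q → MvPowerSeries (Fin n) K, (∀ i, T i ∈ 𝔪 ^ (D - lam)) ∧
      ∀ x ∈ suppV (F - T ᵥ* A), D < degF x.1 := by
  by_cases hdone : ∀ x ∈ suppV F, D < degF x.1
  · exact ⟨0, fun _ => zero_mem _, by rwa [zero_vecMul, sub_zero]⟩
  obtain ⟨d, hd, hdD⟩ := exists_isExpOf_degF_eq hD hdone
  -- induction on `exp F`, for the reversed order on the finitely many exponents of degree `D`
  have hwf : {a : Idx n p | degF a.1 = D}.WellFoundedOn (Function.onFun (· > ·) idxKey) :=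
    Set.wellFoundedOn_image.1 ((finite_setOf_degF_eq D).image idxKey).wellFoundedOn
  clear hD hdone
  revert F
  apply hwf.induction hdD
  intro d hdD ih F hF hd
  obtain ⟨T₁, hT₁, hlt⟩ := exists_idxLT_of_mem_suppV_sub_vecMul hlam hF hd
  rw [hdD] at hT₁
  have hF₁ : F - T₁ ᵥ* A ∈ Submodule.span (MvPowerSeries (Fin n) K) (Set.range A) :=
    sub_mem hF ((mem_span_range_iff_exists_vecMul A).2 ⟨T₁, rfl⟩)
  have hD₁ : ∀ x ∈ suppV (F - T₁ ᵥ* A), D ≤ degF x.1 := fun x hx =>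
    hdD ▸ (hlt x hx).degF_le
  by_cases hdone₁ : ∀ x ∈ suppV (F - T₁ ᵥ* A), D < degF x.1
  · exact ⟨T₁, hT₁, hdone₁⟩
  obtain ⟨d', hd', hd'D⟩ := exists_isExpOf_degF_eq hD₁ hdone₁
  obtain ⟨T₂, hT₂, hdone₂⟩ := ih d' hd'D (idxLT_iff_idxKey_lt.1 (hlt d' hd'.1)) hF₁ hd'
  refine ⟨T₁ + T₂, fun i => add_mem (hT₁ i) (hT₂ i), ?_⟩
  rwa [add_vecMul, ← sub_sub]

lemma exists_seq_le_degF_sub_vecMul (l : ℕ) {F : Fin p → MvPowerSeries (Fin n) K}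
    (hF : F ∈ Submodule.span (MvPowerSeries (Fin n) K) (Set.range A))
    (hl : ∀ x ∈ suppV F, l + lam ≤ degF x.1) :
    ∃ S : ℕ → Fin q → MvPowerSeries (Fin n) K, S 0 = 0 ∧
      (∀ k i, S (k + 1) i - S k i ∈ 𝔪 ^ (l + k)) ∧
      ∀ k, ∀ x ∈ suppV (F - S k ᵥ* A), l + lam + k ≤ degF x.1 := by
  have step : ∀ (k : ℕ) (G : Fin p → MvPowerSeries (Fin n) K),
      ∃ T : Fin q → MvPowerSeries (Fin n) K,
        G ∈ Submodule.span (MvPowerSeries (Fin n) K) (Set.range A) →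
        (∀ x ∈ suppV G, l + lam + k ≤ degF x.1) →
        (∀ i, T i ∈ 𝔪 ^ (l + k)) ∧
          ∀ x ∈ suppV (G - T ᵥ* A), l + lam + k + 1 ≤ degF x.1 := by
    intro k G
    by_cases hG : G ∈ Submodule.span (MvPowerSeries (Fin n) K) (Set.range A) ∧
      ∀ x ∈ suppV G, l + lam + k ≤ degF x.1
    · obtain ⟨T, hT, hrem⟩ := exists_lt_degF_of_mem_suppV_sub_vecMul hlam hG.1 hG.2
      refine ⟨T, fun _ _ => ⟨fun i => ?_, hrem⟩⟩
      simpa [Nat.add_right_comm l lam k] using hT i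
    · exact ⟨0, fun h h' => absurd ⟨h, h'⟩ hG⟩
  choose T hT using step
  let S : ℕ → Fin q → MvPowerSeries (Fin n) K :=
    fun k => Nat.rec 0 (fun k Sk => Sk + T k (F - Sk ᵥ* A)) k
  have hS : ∀ k, F - S k ᵥ* A ∈ Submodule.span (MvPowerSeries (Fin n) K) (Set.range A) ∧
      ∀ x ∈ suppV (F - S k ᵥ* A), l + lam + k ≤ degF x.1 := by
    intro k
    induction k with
    | zero =>
      have hS0 : F - S 0 ᵥ* A = F := by simp [S]
      rw [hS0]
      exact ⟨hF, hl⟩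
    | succ k ih =>
      have hrec : F - S (k + 1) ᵥ* A = F - S k ᵥ* A - T k (F - S k ᵥ* A) ᵥ* A := by
        rw [sub_sub, ← add_vecMul]
      rw [hrec]
      exact ⟨sub_mem ih.1 ((mem_span_range_iff_exists_vecMul A).2 ⟨_, rfl⟩),
        (hT k _ ih.1 ih.2).2⟩
  refine ⟨S, rfl, fun k i => ?_, fun k => (hS k).2⟩
  simpa [S] using (hT k _ (hS k).1 (hS k).2).1 i

theorem exists_vecMul_eq_of_le_degF (l : ℕ) {F : Fin p → MvPowerSeries (Fin n) K}
    (hF : F ∈ Submodule.span (MvPowerSeries (Fin n) K) (Set.range A))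
    (hl : ∀ x ∈ suppV F, l + lam ≤ degF x.1) :
    ∃ W : Fin q → MvPowerSeries (Fin n) K, (∀ i, W i ∈ 𝔪 ^ l) ∧ W ᵥ* A = F := by
  obtain ⟨S, hS0, hSinc, hSrem⟩ := exists_seq_le_degF_sub_vecMul hlam l hF hl
  choose W hW using fun i =>
    IsPrecomplete.exists_sub_mem_pow_of_sub_mem_pow (I := 𝔪) (S := fun k => S k i) (hSinc · i)
  refine ⟨W, fun i => by simpa [hS0] using hW i 0, ?_⟩
  refine sub_eq_zero.1 (eq_zero_of_forall_le_degF fun k x hx => ?_)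
  rw [show W ᵥ* A - F = (W - S k) ᵥ* A - (F - S k ᵥ* A) by rw [sub_vecMul]; abel] at hx
  rcases mem_suppV_or_of_mem_suppV_sub hx with h | h
  · exact le_add_self.trans
      (le_degF_of_mem_suppV_of_mem_pow (vecMul_apply_mem (v := W - S k) (hW · k) A) h)
  · exact (Nat.le_add_left k (l + lam)).trans (hSrem k x h)

end Division

theorem stmt8_general {n p q t : ℕ} (Acols : Fin q → (Fin p → MvPowerSeries (Fin n) ℝ))
    (e : Fin t → Idx n p)
    (hevert : ∀ d : Idx n p,
      IsVertex (diagramOf (Submodule.span (MvPowerSeries (Fin n) ℝ) (Set.range Acols))) d ↔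
        ∃ i, e i = d)
    (lam : ℕ) (hlam : lam = Finset.univ.sup fun i => degF (e i).1) :
    ∀ l : ℕ, ∀ G : Fin q → MvPowerSeries (Fin n) ℝ,
      (fun j => ∑ i, G i * Acols i j) ∈
        ((Ideal.span (Set.range (MvPowerSeries.X : Fin n → MvPowerSeries (Fin n) ℝ)))
            ^ (l + lam) •
          (⊤ : Submodule (MvPowerSeries (Fin n) ℝ) (Fin p → MvPowerSeries (Fin n) ℝ))) →
      ∃ W : Fin q → MvPowerSeries (Fin n) ℝ,
        (fun j => ∑ i, W i * Acols i j) = (0 : Fin p → MvPowerSeries (Fin n) ℝ) ∧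
        G - W ∈
          ((Ideal.span (Set.range (MvPowerSeries.X : Fin n → MvPowerSeries (Fin n) ℝ))) ^ l •
            (⊤ : Submodule (MvPowerSeries (Fin n) ℝ)
              (Fin q → MvPowerSeries (Fin n) ℝ))) := by
  intro l G hG
  have hvertex_le : ∀ v, IsVertex (diagramOf (Submodule.span _ (Set.range Acols))) v →
      degF v.1 ≤ lam := by
    intro v hv
    obtain ⟨i, rfl⟩ := (hevert v).1 hv
    exact hlam ▸ Finset.le_sup (f := fun i => degF (e i).1) (Finset.mem_univ i)
  obtain ⟨W, hW, hWG⟩ := exists_vecMul_eq_of_le_degF hvertex_le l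
    ((mem_span_range_iff_exists_vecMul Acols).2 ⟨G, rfl⟩)
    fun x hx => le_degF_of_mem_suppV_of_mem_pow (mem_smul_top_pi_iff.1 hG) hx
  refine ⟨G - W, ?_, ?_⟩
  · exact (sub_vecMul (A := Acols) G W).trans (sub_eq_zero.2 hWG.symm)
  · rw [sub_sub_cancel]
    exact mem_smul_top_pi_iff.2 hW

/-- **Chevalley estimate.** With `M = Im A` the module generated by the columns
`A₁,…,A_q` and `λ` the maximum of `|α_i|` over the vertices `(α_i,j_i)` of `𝒩(M)`, every
`G` with `A·G ∈ 𝔪^{l+λ}·ℝ⟦x⟧ᵖ` lies in `R + 𝔪^l·ℝ⟦x⟧^q`, where `R = Ker A` is the module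
of relations among the columns of `A`. -/
theorem stmt8 {n p q t : ℕ} (Acols : Fin q → (Fin p → MvPowerSeries (Fin n) ℝ))
    (e : Fin t → Idx n p) (heinj : Function.Injective e)
    (hevert : ∀ d : Idx n p,
      IsVertex (diagramOf (Submodule.span (MvPowerSeries (Fin n) ℝ) (Set.range Acols))) d ↔
        ∃ i, e i = d)
    (lam : ℕ) (hlam : lam = Finset.univ.sup fun i => degF (e i).1) :
    ∀ l : ℕ, ∀ G : Fin q → MvPowerSeries (Fin n) ℝ,
      (fun j => ∑ i, G i * Acols i j) ∈
        ((Ideal.span (Set.range (MvPowerSeries.X : Fin n → MvPowerSeries (Fin n) ℝ)))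
            ^ (l + lam) •
          (⊤ : Submodule (MvPowerSeries (Fin n) ℝ) (Fin p → MvPowerSeries (Fin n) ℝ))) →
      ∃ W : Fin q → MvPowerSeries (Fin n) ℝ,
        (fun j => ∑ i, W i * Acols i j) = (0 : Fin p → MvPowerSeries (Fin n) ℝ) ∧
        G - W ∈
          ((Ideal.span (Set.range (MvPowerSeries.X : Fin n → MvPowerSeries (Fin n) ℝ))) ^ l •
            (⊤ : Submodule (MvPowerSeries (Fin n) ℝ)
              (Fin q → MvPowerSeries (Fin n) ℝ))) :=
  stmt8_general Acols e hevert lam hlam
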